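/- For all integers d ≥ 1 and n ≥ 0, the number of Schmidt type d-fold partition diamonds of 2n+1 is divisible by 2^d: s_d(2n+1) ≡ 0 (mod 2^d). -/

import Mathlib

open Finset

/-- A `d`-fold partition diamond: nonnegative integers `a 0, a 1, …` together with
`b k j` (representing `b_{k+1, j+1}`) satisfying `a k ≥ b k j ≥ a (k+1)`,
with all but finitely many entries equal to zero. -/
structure DFold (d : ℕ) where
  a : ℕ → ℕ
  b : ℕ → Fin d → ℕ
  upper : ∀ k j, b k j ≤ a k
  lower : ∀ k j, a (k + 1) ≤ b k j
  fin : ∃ N, ∀ k, N ≤ k → a k = 0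

/-- `sFold d n`: the number of Schmidt type `d`-fold partition diamonds of `n`
(only the links `a k` are summed). -/
noncomputable def sFold (d n : ℕ) : ℕ :=
  Set.ncard {D : DFold d | (∑ᶠ k, D.a k) = n}

/-!
A sequence of links with odd sum has a link `k` at which `a k + a (k+1)` is odd. There the
reflection `b ↦ a k + a (k+1) - b` preserves the interval `[a (k+1), a k]` and has no fixed
point, the midpoint being a half-integer. Reflecting any subset of the `d` entries `b k j` at
the first such `k` is thus a free action of `(ℤ/2)^d` on the diamonds of odd weight.
-/

theorem exists_odd_add_succ_of_odd_finsum {a : ℕ → ℕ} (ha : ∃ N, ∀ k, N ≤ k → a k = 0)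
    (hodd : Odd (∑ᶠ k, a k)) : ∃ k, Odd (a k + a (k + 1)) := by
  by_contra! h
  have h_parity : ∀ k, a k % 2 = a 0 % 2 := by
    intro k
    induction k with
    | zero => rfl
    | succ k ih =>
      have := Nat.not_odd_iff.mp (h k)
      omega
  obtain ⟨N, hN⟩ := ha
  have h_even : ∀ k, 2 ∣ a k := fun k => by
    have := h_parity N
    have := h_parity k
    rw [hN N le_rfl] at *
    omega
  have h_supp : Function.support a ⊆ ↑(range N) := fun k hk => by
    by_contra hkN
    exact hk (hN k (by simpa using hkN))
  rw [finsum_eq_sum_of_support_subset a h_supp, Nat.odd_iff] at hodd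
  have := Finset.dvd_sum fun k (_ : k ∈ range N) => h_even k
  omega

namespace DFold

variable {d : ℕ}

theorem ext {D E : DFold d} (ha : D.a = E.a) (hb : D.b = E.b) : D = E := by
  cases D; cases E; cases ha; cases hb; rfl

def reflect (D : DFold d) (k₀ : ℕ) (ε : Fin d → Bool) : DFold d where
  a := D.a
  b k j := if k = k₀ ∧ ε j then D.a k₀ + D.a (k₀ + 1) - D.b k j else D.b k j
  upper k j := by
    split_ifs with h
    · obtain ⟨rfl, -⟩ := h
      have := D.lower k j
      omega
    · exact D.upper k j
  lower k j := by
    split_ifs with h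
    · obtain ⟨rfl, -⟩ := h
      have := D.upper k j
      omega
    · exact D.lower k j
  fin := D.fin

@[simp] theorem reflect_a (D : DFold d) (k₀ : ℕ) (ε : Fin d → Bool) :
    (D.reflect k₀ ε).a = D.a := rfl

theorem reflect_b_self (D : DFold d) (k₀ : ℕ) (ε : Fin d → Bool) (j : Fin d) :
    (D.reflect k₀ ε).b k₀ j =
      if ε j then D.a k₀ + D.a (k₀ + 1) - D.b k₀ j else D.b k₀ j := by
  simp [reflect]

theorem reflect_reflect (D : DFold d) (k₀ : ℕ) (ε : Fin d → Bool) :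
    (D.reflect k₀ ε).reflect k₀ ε = D := by
  refine ext rfl (funext₂ fun k j => ?_)
  have := D.upper k j
  have := D.lower k j
  simp only [reflect]
  split_ifs with h
  · obtain ⟨rfl, -⟩ := h
    omega
  · rfl

def upperHalf (D : DFold d) (k : ℕ) : Fin d → Bool :=
  fun j => decide (D.a k + D.a (k + 1) ≤ 2 * D.b k j)

theorem two_mul_b_reflect_upperHalf_lt (D : DFold d) {k : ℕ} (hk : Odd (D.a k + D.a (k + 1)))
    (j : Fin d) :
    2 * (D.reflect k (D.upperHalf k)).b k j < D.a k + D.a (k + 1) := by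
  have := D.upper k j
  have := D.lower k j
  rw [Nat.odd_iff] at hk
  rw [reflect_b_self, upperHalf]
  split_ifs with h <;> simp only [decide_eq_true_eq] at h <;> omega

theorem upperHalf_reflect (D : DFold d) {k : ℕ} (hk : Odd (D.a k + D.a (k + 1)))
    (hD : ∀ j, 2 * D.b k j < D.a k + D.a (k + 1)) (ε : Fin d → Bool) :
    (D.reflect k ε).upperHalf k = ε := by
  funext j
  have := D.upper k j
  have := D.lower k j
  have := hD j
  rw [Nat.odd_iff] at hk
  rw [upperHalf, reflect_a, reflect_b_self]
  cases ε j <;>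
    simp only [Bool.false_eq_true, ↓reduceIte, decide_eq_true_eq, decide_eq_false_iff_not,
      not_le] <;> omega

-- junk value `0` when no adjacent sum is odd
noncomputable def pivot (D : DFold d) : ℕ := sInf {k | Odd (D.a k + D.a (k + 1))}

theorem odd_at_pivot (D : DFold d) (h : ∃ k, Odd (D.a k + D.a (k + 1))) :
    Odd (D.a D.pivot + D.a (D.pivot + 1)) :=
  Nat.sInf_mem h

@[simp] theorem pivot_reflect (D : DFold d) (k₀ : ℕ) (ε : Fin d → Bool) :
    (D.reflect k₀ ε).pivot = D.pivot := rfl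

variable (d) (p : (ℕ → ℕ) → Prop)

def LowerAtPivot : Type :=
  {D : DFold d // p D.a ∧ ∀ j, 2 * D.b D.pivot j < D.a D.pivot + D.a (D.pivot + 1)}

variable {p}

noncomputable def equivReflectAtPivot
    (hp : ∀ D : DFold d, p D.a → ∃ k, Odd (D.a k + D.a (k + 1))) :
    {D : DFold d // p D.a} ≃ (Fin d → Bool) × LowerAtPivot d p where
  toFun D := (D.1.upperHalf D.1.pivot,
    ⟨D.1.reflect D.1.pivot (D.1.upperHalf D.1.pivot), D.2,
      D.1.two_mul_b_reflect_upperHalf_lt (D.1.odd_at_pivot (hp _ D.2))⟩)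
  invFun εD := ⟨εD.2.1.reflect εD.2.1.pivot εD.1, εD.2.2.1⟩
  left_inv D := Subtype.ext (D.1.reflect_reflect _ _)
  right_inv := by
    rintro ⟨ε, D, hpD, hD⟩
    have hε := D.upperHalf_reflect (D.odd_at_pivot (hp _ hpD)) hD ε
    simp only [pivot_reflect, hε, reflect_reflect]

theorem two_pow_dvd_card (hp : ∀ D : DFold d, p D.a → ∃ k, Odd (D.a k + D.a (k + 1))) :
    2 ^ d ∣ Nat.card {D : DFold d // p D.a} := by
  rw [Nat.card_congr (equivReflectAtPivot d hp), Nat.card_prod, Nat.card_fun]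
  simp

end DFold

theorem sFold_odd_congruence_general (d : ℕ) (n : ℕ) :
    2 ^ d ∣ sFold d (2 * n + 1) := by
  rw [sFold, ← Nat.card_coe_set_eq]
  exact DFold.two_pow_dvd_card d (p := fun a => ∑ᶠ k, a k = 2 * n + 1) fun D hD =>
    exists_odd_add_succ_of_odd_finsum D.fin (hD ▸ odd_two_mul_add_one n)

/-- Theorem 4.4: for all `d ≥ 1` and `n ≥ 0`, `s_d(2n+1) ≡ 0 (mod 2^d)`. -/
theorem sFold_odd_congruence (d : ℕ) (hd : 1 ≤ d) (n : ℕ) :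
    2 ^ d ∣ sFold d (2 * n + 1) :=
  sFold_odd_congruence_general d n
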